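/- Let $\ell, w$ be nonnegative integers and $0 \le j, k \le \ell$. Define $a_j^{w,k} = (-2i)^j (-w-k)_j \frac{j!}{(2j)!} \binom{\ell}{j}\binom{\ell+j+1}{j}^{-1} {}_4F_3(-k, -\ell-w-1, -j, j+1; -\ell, -k-w, 1; 1)$. Then $a_0^{w,k} = 1$ and the sequence $\{a_j^{w,k}\}$ satisfies, for $0 \le j \le \ell-1$ (with $a_{-1}^{w,k} = 0$): $i\,\frac{j(\ell-j+1)(w+k-j+1)(w+k+j+1)}{2(2j-1)(2j+1)} a_{j-1}^{w,k} - \frac{j(j+1)}{2} a_j^{w,k} - i\,\frac{(j+1)(\ell+j+2)}{2} a_{j+1}^{w,k} = \big(w(\tfrac{\ell}{2}-k) - k(\tfrac{\ell}{2}+1)\big) a_j^{w,k}$. -/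
import Mathlib


/-- Pochhammer symbol (rising factorial) over ℂ. -/
noncomputable def poch (x : ℂ) (m : ℕ) : ℂ := ∏ i ∈ Finset.range m, (x + i)

/-- The Racah polynomial value
`R_k(λ(j)) = ₄F₃(-k, -ℓ-w-1, -j, j+1; -ℓ, -k-w, 1; 1)` (terminating sum). -/
noncomputable def racahR (ℓ w j k : ℕ) : ℂ :=
  ∑ m ∈ Finset.range (min j k + 1),
    (poch (-(k : ℂ)) m * poch (-(ℓ : ℂ) - (w : ℂ) - 1) m * poch (-(j : ℂ)) m *
        poch ((j : ℂ) + 1) m) /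
      (poch (-(ℓ : ℂ)) m * poch (-(k : ℂ) - (w : ℂ)) m * poch 1 m * (Nat.factorial m : ℂ))

/-- `a_j^{w,k} = (-2i)^j (-w-k)_j (j!/(2j)!) (ℓ choose j) (ℓ+j+1 choose j)⁻¹ R_k(λ(j))`. -/
noncomputable def aCoef (ℓ w j k : ℕ) : ℂ :=
  (-2 * Complex.I) ^ j * poch (-(w : ℂ) - (k : ℂ)) j *
    ((Nat.factorial j : ℂ) / (Nat.factorial (2 * j) : ℂ)) *
    (Nat.choose ℓ j : ℂ) * ((Nat.choose (ℓ + j + 1) j : ℂ))⁻¹ * racahR ℓ w j k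


set_option maxHeartbeats 1000000

lemma poch_succ (x : ℂ) (n : ℕ) : poch x (n+1) = poch x n * (x + n) := by
  simp [poch, Finset.prod_range_succ]
lemma poch_one_eq (n : ℕ) : poch 1 n = (Nat.factorial n : ℂ) := by
  induction n with
  | zero => simp [poch]
  | succ n ih => rw [poch_succ, ih, Nat.factorial_succ]; push_cast; ring
lemma poch_nat_zero {j m : ℕ} (h : j < m) : poch (-(j:ℂ)) m = 0 := by
  apply Finset.prod_eq_zero (Finset.mem_range.2 h); simp
lemma ncast_ne {a : ℕ} (h : 0 < a) : ((a:ℕ):ℂ) ≠ 0 := Nat.cast_ne_zero.2 h.ne'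
lemma poch_nat_ne_zero {a m : ℕ} (h : m ≤ a) : poch (-(a:ℂ)) m ≠ 0 := by
  rw [poch]
  apply Finset.prod_ne_zero_iff.2
  intro i hi
  rw [Finset.mem_range] at hi
  have hia : (i:ℂ) ≠ (a:ℂ) := by exact_mod_cast Nat.ne_of_lt (lt_of_lt_of_le hi h)
  intro hc
  exact hia (by linear_combination hc)

noncomputable def Pref (ℓ w k j : ℕ) : ℂ :=
  (-2 * Complex.I) ^ j * poch (-(w : ℂ) - (k : ℂ)) j *
    ((Nat.factorial j : ℂ) / (Nat.factorial (2 * j) : ℂ)) *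
    (Nat.choose ℓ j : ℂ) * ((Nat.choose (ℓ + j + 1) j : ℂ))⁻¹

noncomputable def Tm (ℓ w k j m : ℕ) : ℂ :=
  Pref ℓ w k j *
    ((poch (-(k : ℂ)) m * poch (-(ℓ : ℂ) - (w : ℂ) - 1) m) *
      (poch (-(j : ℂ)) m * poch ((j : ℂ) + 1) m)) /
    (poch (-(ℓ : ℂ)) m * poch (-(k : ℂ) - (w : ℂ)) m * poch 1 m * (Nat.factorial m : ℂ))

noncomputable def Gg (ℓ w k j : ℕ) : ℕ → ℂ
  | 0 => 0
  | (n+1) => Pref ℓ w k j * ((n:ℂ)+1)^2 * ((n:ℂ)-(ℓ:ℂ)) * ((n:ℂ)-(k:ℂ)-(w:ℂ)) *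
      ((poch (-(k:ℂ)) (n+1) * poch (-(ℓ:ℂ)-(w:ℂ)-1) (n+1)) *
        (poch (-(j:ℂ)) n * poch ((j:ℂ)+1) n)) /
      (poch (-(ℓ:ℂ)) (n+1) * poch (-(k:ℂ)-(w:ℂ)) (n+1) * ((Nat.factorial (n+1) : ℂ))^2)

lemma poch_SW (k w m : ℕ) : poch (-(k:ℂ)-(w:ℂ)) m = poch (-((k+w:ℕ):ℂ)) m := by
  congr 1; push_cast; ring

lemma Gg_succ (ℓ w k j n : ℕ) : Gg ℓ w k j (n+1) =
    Pref ℓ w k j * ((n:ℂ)+1)^2 * ((n:ℂ)-(ℓ:ℂ)) * ((n:ℂ)-(k:ℂ)-(w:ℂ)) *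
      ((poch (-(k:ℂ)) (n+1) * poch (-(ℓ:ℂ)-(w:ℂ)-1) (n+1)) *
        (poch (-(j:ℂ)) n * poch ((j:ℂ)+1) n)) /
      (poch (-(ℓ:ℂ)) (n+1) * poch (-(k:ℂ)-(w:ℂ)) (n+1) * ((Nat.factorial (n+1) : ℂ))^2) := rfl

lemma Gg_zero (ℓ w k j : ℕ) : Gg ℓ w k j 0 = 0 := rfl

lemma Gg_top (ℓ w k j : ℕ) : Gg ℓ w k j (k+1) = 0 := by
  rw [Gg_succ, poch_nat_zero (Nat.lt_succ_self k)]
  simp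

lemma step2 (ℓ w k j m : ℕ) (hm : m ≤ k) (hk : k ≤ ℓ) :
    (((m:ℂ))^2 - (m:ℂ)*(1+(ℓ:ℂ)+(k:ℂ)+(w:ℂ)) + (k:ℂ)*((ℓ:ℂ)+(w:ℂ)+1)) * Tm ℓ w k j m
      = Gg ℓ w k j (m+1) := by
  rcases eq_or_lt_of_le hm with rfl | hmk
  · -- m = k : both sides are zero
    have h1 : ((m:ℂ))^2 - (m:ℂ)*(1+(ℓ:ℂ)+(m:ℂ)+(w:ℂ)) + (m:ℂ)*((ℓ:ℂ)+(w:ℂ)+1) = 0 := by ring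
    rw [h1, Gg_top, zero_mul]
  · -- m < k
    have hDL : poch (-(ℓ:ℂ)) m ≠ 0 := poch_nat_ne_zero (by omega)
    have hDS : poch (-(k:ℂ)-(w:ℂ)) m ≠ 0 := by
      rw [poch_SW]; exact poch_nat_ne_zero (by omega)
    have hF : ((Nat.factorial m : ℕ):ℂ) ≠ 0 := ncast_ne (Nat.factorial_pos _)
    have hmL : (m:ℂ) - (ℓ:ℂ) ≠ 0 := by
      rw [sub_ne_zero]
      have : m ≠ ℓ := by omega
      exact_mod_cast this
    have hmS : (m:ℂ) - (k:ℂ) - (w:ℂ) ≠ 0 := by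
      have h1 : (m:ℂ) - (k:ℂ) - (w:ℂ) = (m:ℂ) - ((k+w:ℕ):ℂ) := by push_cast; ring
      rw [h1, sub_ne_zero]
      have : m ≠ k + w := by omega
      exact_mod_cast this
    have hm1 : ((m:ℂ)+1) ≠ 0 := by exact_mod_cast ncast_ne (show 0 < m+1 by omega)
    rw [Gg_succ, Tm]
    rw [poch_succ (-(k:ℂ)) m, poch_succ (-(ℓ:ℂ)-(w:ℂ)-1) m, poch_succ (-(ℓ:ℂ)) m,
      poch_succ (-(k:ℂ)-(w:ℂ)) m, poch_one_eq,
      show ((Nat.factorial (m+1) : ℕ):ℂ) = ((m:ℂ)+1) * (Nat.factorial m : ℂ) by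
        rw [Nat.factorial_succ]; push_cast; ring]
    have hmL2 : (-(ℓ:ℂ) + m) ≠ 0 := by intro h; exact hmL (by linear_combination h)
    have hmS2 : (-(k:ℂ) - (w:ℂ) + m) ≠ 0 := by intro h; exact hmS (by linear_combination h)
    rw [← mul_div_assoc]
    rw [div_eq_div_iff
      (mul_ne_zero (mul_ne_zero (mul_ne_zero hDL hDS) hF) hF)
      (mul_ne_zero (mul_ne_zero (mul_ne_zero hDL hmL2) (mul_ne_zero hDS hmS2))
        (pow_ne_zero _ (mul_ne_zero hm1 hF)))]
    ring

lemma Pref_char (ℓ w k j : ℕ) :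
    Pref ℓ w k j * ((Nat.factorial (2*j) : ℂ) * (Nat.choose (ℓ+j+1) j : ℂ)) =
      (-2 * Complex.I) ^ j * poch (-(w : ℂ) - (k : ℂ)) j * (Nat.factorial j : ℂ) *
        (Nat.choose ℓ j : ℂ) := by
  have h1 : ((Nat.factorial (2*j)):ℂ) ≠ 0 := ncast_ne (Nat.factorial_pos _)
  have h2 : ((Nat.choose (ℓ+j+1) j):ℂ) ≠ 0 := ncast_ne (Nat.choose_pos (by omega))
  unfold Pref
  field_simp

lemma Pref_succ_mul (ℓ w k j : ℕ) (hj : j < ℓ) :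
    (2*(j:ℂ)+1) * ((ℓ:ℂ) + j + 2) * Pref ℓ w k (j+1) =
      -Complex.I * ((j:ℂ) - k - w) * ((ℓ:ℂ) - j) * Pref ℓ w k j := by
  have hj1 : ((j:ℂ)+1) ≠ 0 := by exact_mod_cast ncast_ne (show 0 < j+1 by omega)
  have hq2 : ((Nat.factorial (2*(j+1))):ℂ) ≠ 0 := ncast_ne (Nat.factorial_pos _)
  have hq3 : ((Nat.choose (ℓ+(j+1)+1) (j+1)):ℂ) ≠ 0 := ncast_ne (Nat.choose_pos (by omega))
  have hchar1 := Pref_char ℓ w k j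
  have hchar2 := Pref_char ℓ w k (j+1)
  rw [pow_succ, poch_succ, show (j+1).factorial = (j+1)*j.factorial from Nat.factorial_succ _] at hchar2
  push_cast at hchar2
  have hE1 : ((j:ℂ)+1) * (Nat.choose ℓ (j+1) : ℂ) = ((ℓ:ℂ)-j) * (Nat.choose ℓ j : ℂ) := by
    have h := Nat.choose_succ_right_eq ℓ j
    have hc : ((ℓ - j : ℕ):ℂ) = (ℓ:ℂ) - (j:ℂ) := by
      push_cast [Nat.cast_sub hj.le]; ring
    calc ((j:ℂ)+1) * (Nat.choose ℓ (j+1) : ℂ) = ((Nat.choose ℓ (j+1) * (j+1) : ℕ):ℂ) := by push_cast; ring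
    _ = ((Nat.choose ℓ j * (ℓ - j) : ℕ):ℂ) := by rw [h]
    _ = _ := by rw [Nat.cast_mul, hc]; ring
  have hE2 : ((j:ℂ)+1) * (Nat.choose (ℓ+(j+1)+1) (j+1) : ℂ) = ((ℓ:ℂ)+j+2) * (Nat.choose (ℓ+j+1) j : ℂ) := by
    have h := Nat.add_one_mul_choose_eq (ℓ+j+1) j
    calc ((j:ℂ)+1) * (Nat.choose (ℓ+(j+1)+1) (j+1) : ℂ)
        = ((Nat.choose (ℓ+j+1+1) (j+1) * (j+1) : ℕ):ℂ) := by push_cast; ring_nf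
    _ = ((Nat.succ (ℓ+j+1) * Nat.choose (ℓ+j+1) j : ℕ):ℂ) := by rw [← h]
    _ = _ := by push_cast [Nat.succ_eq_add_one]; ring
  have hf2 : ((Nat.factorial (2*(j+1))):ℂ) = (2*(j:ℂ)+2)*(2*(j:ℂ)+1)*((Nat.factorial (2*j)):ℂ) := by
    rw [show 2*(j+1) = (2*j+1)+1 by ring, Nat.factorial_succ, Nat.factorial_succ]
    push_cast; ring
  apply mul_right_cancel₀ (b := ((j:ℂ)+1) * ((Nat.factorial (2*(j+1))):ℂ) * ((Nat.choose (ℓ+(j+1)+1) (j+1)):ℂ))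
    (mul_ne_zero (mul_ne_zero hj1 hq2) hq3)
  linear_combination
    ((2*(j:ℂ)+1)*((ℓ:ℂ)+j+2)*((j:ℂ)+1)) * hchar2
    + ((2*(j:ℂ)+1)*((ℓ:ℂ)+j+2)*((j:ℂ)+1)*((-2*Complex.I)^j * poch (-(w:ℂ)-(k:ℂ)) j)*(-2*Complex.I)*(-(w:ℂ)-(k:ℂ)+(j:ℂ))*((Nat.factorial j:ℂ))) * hE1
    + (Complex.I*((j:ℂ)-k-w)*((ℓ:ℂ)-j)*(Pref ℓ w k j)*((j:ℂ)+1)*((Nat.choose (ℓ+(j+1)+1) (j+1)):ℂ)) * hf2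
    + (Complex.I*((j:ℂ)-k-w)*((ℓ:ℂ)-j)*(2*(j:ℂ)+2)*(2*(j:ℂ)+1)*(Pref ℓ w k j)*((Nat.factorial (2*j):ℂ))) * hE2
    + (Complex.I*((j:ℂ)-k-w)*((ℓ:ℂ)-j)*(2*(j:ℂ)+2)*(2*(j:ℂ)+1)*((ℓ:ℂ)+j+2)) * hchar1

lemma poch_succ' (x : ℂ) (n : ℕ) : poch x (n+1) = x * poch (x+1) n := by
  rw [poch, Finset.prod_range_succ', poch, mul_comm]
  congr 1
  · simp
  · apply Finset.prod_congr rfl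
    intro i _
    push_cast; ring

-- pair3 / diag
lemma pairDiag (x : ℂ) (n : ℕ) :
    poch (-x) (n+1) * poch (x+1) (n+1) =
      (((n:ℂ)-x)*(x+(n:ℂ)+1)) * (poch (-x) n * poch (x+1) n) := by
  rw [poch_succ, poch_succ]
  push_cast
  ring

-- for T(j-1): base at x+1
lemma pairUp (x : ℂ) (n : ℕ) :
    poch (-x) (n+1) * poch (x+1) (n+1) =
      -((((n:ℂ))-x-1)*(((n:ℂ))-x)) * (poch (-(x+1)) n * poch (x+1+1) n) := by
  have i1 : poch (-(x+1)) (n+1) = -(x+1) * poch (-x) n := by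
    have h : -(x+1)+1 = -x := by ring
    rw [poch_succ', h]
  have i2 : poch (-(x+1)) (n+1) = poch (-(x+1)) n * (-(x+1)+n) := poch_succ _ _
  have i3 : poch (-x) (n+1) = poch (-x) n * (-x+(n:ℂ)) := poch_succ _ _
  have i4 : poch (x+1) (n+1) = (x+1) * poch (x+1+1) n := poch_succ' _ _
  have h5 : -(x+1) * poch (-x) n = poch (-(x+1)) n * (-(x+1)+(n:ℂ)) := by
    rw [← i1, i2]
  linear_combination (poch (x+1) (n+1)) * i3 + (poch (-x) n * (-x+(n:ℂ))) * i4 +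
    (-((n:ℂ)-x) * poch (x+1+1) n) * h5

-- for T(j+1): base at x
lemma pairDown (x : ℂ) (n : ℕ) :
    poch (-(x+1)) (n+1) * poch (x+1+1) (n+1) =
      -((x+(n:ℂ)+1)*(x+(n:ℂ)+2)) * (poch (-x) n * poch (x+1) n) := by
  have i1 : poch (-(x+1)) (n+1) = -(x+1) * poch (-x) n := by
    have h : -(x+1)+1 = -x := by ring
    rw [poch_succ', h]
  have i2 : poch (x+1+1) (n+1) = poch (x+1+1) n * (x+1+1+(n:ℂ)) := poch_succ _ _
  have i3 : poch (x+1) (n+1) = (x+1) * poch (x+1+1) n := poch_succ' _ _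
  have i4 : poch (x+1) (n+1) = poch (x+1) n * (x+1+(n:ℂ)) := poch_succ _ _
  have h5 : (x+1) * poch (x+1+1) n = poch (x+1) n * (x+1+(n:ℂ)) := by rw [← i3, i4]
  linear_combination (poch (x+1+1) (n+1)) * i1 + (-(x+1) * poch (-x) n) * i2 +
    (-(poch (-x) n) * (x+1+1+(n:ℂ))) * h5

lemma core (ℓ w k j m : ℕ) (hj : j < ℓ) (hm : m ≤ k) (hk : k ≤ ℓ) :
    Complex.I * ((j:ℂ)*((ℓ:ℂ)-(j:ℂ)+1)*((w:ℂ)+(k:ℂ)-(j:ℂ)+1)*((w:ℂ)+(k:ℂ)+(j:ℂ)+1)) * Tm ℓ w k (j-1) m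
    - (2*(j:ℂ)-1)*(2*(j:ℂ)+1)*((j:ℂ)*((j:ℂ)+1)) * Tm ℓ w k j m
    - Complex.I * (((j:ℂ)+1)*((ℓ:ℂ)+(j:ℂ)+2)) * ((2*(j:ℂ)-1)*(2*(j:ℂ)+1)) * Tm ℓ w k (j+1) m
    - (2*(j:ℂ)-1)*(2*(j:ℂ)+1)*((w:ℂ)*((ℓ:ℂ)-2*(k:ℂ)) - (k:ℂ)*((ℓ:ℂ)+2)) * Tm ℓ w k j m
  = 2*(2*(j:ℂ)-1)*(2*(j:ℂ)+1) *
      ((((m:ℂ))^2 - (m:ℂ)*(1+(ℓ:ℂ)+(k:ℂ)+(w:ℂ)) + (k:ℂ)*((ℓ:ℂ)+(w:ℂ)+1)) * Tm ℓ w k j m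
        - Gg ℓ w k j m) := by
  have poch_zero : ∀ x : ℂ, poch x 0 = 1 := fun x => by simp [poch]
  rcases m with _ | n
  · -- m = 0
    have hT : ∀ j' : ℕ, Tm ℓ w k j' 0 = Pref ℓ w k j' := by
      intro j'; simp [Tm, poch_zero]
    simp only [hT, Gg_zero]
    rcases j with _ | j'
    · simp only [Nat.zero_sub]
      have r2 := Pref_succ_mul ℓ w k 0 hj
      push_cast at r2 ⊢
      linear_combination (-Complex.I*((0:ℂ)+1)*(2*(0:ℂ)-1)) * r2
        + (((0:ℂ)+1)*(2*(0:ℂ)-1)*((0:ℂ)-(k:ℂ)-(w:ℂ))*((ℓ:ℂ)-(0:ℂ)) * Pref ℓ w k 0) * Complex.I_sq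
    · simp only [Nat.add_sub_cancel]
      have r1 := Pref_succ_mul ℓ w k j' (by omega)
      have r2 := Pref_succ_mul ℓ w k (j'+1) hj
      push_cast at r1 r2 ⊢
      linear_combination (-(((j':ℂ)+1))*((w:ℂ)+(k:ℂ)+((j':ℂ)+1)+1)) * r1
        + (-Complex.I*(((j':ℂ)+1)+1)*(2*((j':ℂ)+1)-1)) * r2
        + ((((j':ℂ)+1)+1)*(2*((j':ℂ)+1)-1)*(((j':ℂ)+1)-(k:ℂ)-(w:ℂ))*((ℓ:ℂ)-((j':ℂ)+1)) * Pref ℓ w k (j'+1)) * Complex.I_sq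
  · -- m = n+1
    rcases j with _ | j'
    · simp only [Nat.zero_sub]
      have r2 := Pref_succ_mul ℓ w k 0 hj
      rw [Gg_succ]
      unfold Tm
      push_cast at r2 ⊢
      have pd0 : poch (-1) (n+1) * poch (1+1) (n+1)
          = -(((0:ℂ)+(n:ℂ)+1)*((0:ℂ)+(n:ℂ)+2)) * (poch (-(0:ℂ)) n * poch ((0:ℂ)+1) n) := by
        have h := pairDown (0:ℂ) n
        rw [show -((0:ℂ)+1) = -1 by norm_num, show ((0:ℂ)+1+1) = 1+1 by norm_num] at h
        exact h
      rw [pairDiag (0:ℂ) n, pd0]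
      simp only [poch_one_eq]
      linear_combination
        (Complex.I*((0:ℂ)+1)*(2*(0:ℂ)-1)*((0:ℂ)+(n:ℂ)+1)*((0:ℂ)+(n:ℂ)+2)) * (((poch (-(k:ℂ)) (n+1) * poch (-(ℓ:ℂ)-(w:ℂ)-1) (n+1)) * (poch (-(0:ℂ)) n * poch ((0:ℂ)+1) n)) / (poch (-(ℓ:ℂ)) (n+1) * poch (-(k:ℂ)-(w:ℂ)) (n+1) * ((Nat.factorial (n+1) : ℂ)) * ((Nat.factorial (n+1) : ℂ)))) * r2
        + (-(((0:ℂ)+1)*(2*(0:ℂ)-1)*((0:ℂ)+(n:ℂ)+1)*((0:ℂ)+(n:ℂ)+2)*((0:ℂ)-(k:ℂ)-(w:ℂ))*((ℓ:ℂ)-(0:ℂ)))) * (Pref ℓ w k 0 * ((poch (-(k:ℂ)) (n+1) * poch (-(ℓ:ℂ)-(w:ℂ)-1) (n+1)) * (poch (-(0:ℂ)) n * poch ((0:ℂ)+1) n)) / (poch (-(ℓ:ℂ)) (n+1) * poch (-(k:ℂ)-(w:ℂ)) (n+1) * ((Nat.factorial (n+1) : ℂ)) * ((Nat.factorial (n+1)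 : ℂ)))) * Complex.I_sq
    · simp only [Nat.add_sub_cancel]
      have r1 := Pref_succ_mul ℓ w k j' (by omega)
      have r2 := Pref_succ_mul ℓ w k (j'+1) hj
      rw [Gg_succ]
      unfold Tm
      push_cast at r1 r2 ⊢
      rw [pairUp ((j':ℂ)) n, pairDiag ((j':ℂ)+1) n, pairDown ((j':ℂ)+1) n]
      simp only [poch_one_eq]
      linear_combination
        ((((j':ℂ)+1))*((w:ℂ)+(k:ℂ)+((j':ℂ)+1)+1)*((n:ℂ)-((j':ℂ)+1))*((n:ℂ)-((j':ℂ)+1)+1)) * (((poch (-(k:ℂ)) (n+1) * poch (-(ℓ:ℂ)-(w:ℂ)-1) (n+1)) * (poch (-((j':ℂ)+1)) n * poch ((j':ℂ)+1+1) n)) / (poch (-(ℓ:ℂ)) (n+1) * poch (-(k:ℂ)-(w:ℂ)) (n+1) * ((Nat.factorial (n+1) : ℂ)) * ((Nat.factorial (n+1) : ℂ)))) * r1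
        + (Complex.I*(((j':ℂ)+1)+1)*(2*((j':ℂ)+1)-1)*(((j':ℂ)+1)+(n:ℂ)+1)*(((j':ℂ)+1)+(n:ℂ)+2)) * (((poch (-(k:ℂ)) (n+1) * poch (-(ℓ:ℂ)-(w:ℂ)-1) (n+1)) * (poch (-((j':ℂ)+1)) n * poch ((j':ℂ)+1+1) n)) / (poch (-(ℓ:ℂ)) (n+1) * poch (-(k:ℂ)-(w:ℂ)) (n+1) * ((Nat.factorial (n+1) : ℂ)) * ((Nat.factorial (n+1) : ℂ)))) * r2
        + (-((((j':ℂ)+1)+1)*(2*((j':ℂ)+1)-1)*(((j':ℂ)+1)+(n:ℂ)+1)*(((j':ℂ)+1)+(n:ℂ)+2)*(((j':ℂ)+1)-(k:ℂ)-(w:ℂ))*((ℓ:ℂ)-((j':ℂ)+1)))) * (Pref ℓ w k (j'+1) * ((poch (-(k:ℂ)) (n+1) * poch (-(ℓ:ℂ)-(w:ℂ)-1) (n+1)) * (poch (-((j':ℂ)+1)) n * poch ((j':ℂ)+1+1) n)) / (poch (-(ℓ:ℂ)) (n+1) * poch (-(k:ℂ)-(w:ℂ)) (n+1) * ((Nat.factorial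 (n+1) : ℂ)) * ((Nat.factorial (n+1) : ℂ)))) * Complex.I_sq

lemma aCoef_eq_sum (ℓ w j k : ℕ) :
    aCoef ℓ w j k = ∑ m ∈ Finset.range (k+1), Tm ℓ w k j m := by
  rw [aCoef, racahR, Finset.mul_sum]
  rw [Finset.sum_subset (Finset.range_subset_range.2 (by omega : min j k + 1 ≤ k + 1))]
  · apply Finset.sum_congr rfl
    intro m _
    rw [Tm, Pref]
    ring
  · intro m hm hnm
    rw [Finset.mem_range] at hm hnm
    have hj : j < m := by omega
    simp only [Tm, poch_nat_zero hj]
    simp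

lemma certm (ℓ w k j m : ℕ) (hj : j < ℓ) (hm : m ≤ k) (hk : k ≤ ℓ) :
    Complex.I * ((j:ℂ)*((ℓ:ℂ)-(j:ℂ)+1)*((w:ℂ)+(k:ℂ)-(j:ℂ)+1)*((w:ℂ)+(k:ℂ)+(j:ℂ)+1)) * Tm ℓ w k (j-1) m
    - (2*(j:ℂ)-1)*(2*(j:ℂ)+1)*((j:ℂ)*((j:ℂ)+1)) * Tm ℓ w k j m
    - Complex.I * (((j:ℂ)+1)*((ℓ:ℂ)+(j:ℂ)+2)) * ((2*(j:ℂ)-1)*(2*(j:ℂ)+1)) * Tm ℓ w k (j+1) m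
    - (2*(j:ℂ)-1)*(2*(j:ℂ)+1)*((w:ℂ)*((ℓ:ℂ)-2*(k:ℂ)) - (k:ℂ)*((ℓ:ℂ)+2)) * Tm ℓ w k j m
  = 2*(2*(j:ℂ)-1)*(2*(j:ℂ)+1) * (Gg ℓ w k j (m+1) - Gg ℓ w k j m) := by
  rw [core ℓ w k j m hj hm hk, step2 ℓ w k j m hm hk]

lemma hsum_tele (ℓ w k j : ℕ) (hj : j < ℓ) (hk : k ≤ ℓ) :
    ∑ m ∈ Finset.range (k+1),
      (Complex.I * ((j:ℂ)*((ℓ:ℂ)-(j:ℂ)+1)*((w:ℂ)+(k:ℂ)-(j:ℂ)+1)*((w:ℂ)+(k:ℂ)+(j:ℂ)+1)) * Tm ℓ w k (j-1) m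
      - (2*(j:ℂ)-1)*(2*(j:ℂ)+1)*((j:ℂ)*((j:ℂ)+1)) * Tm ℓ w k j m
      - Complex.I * (((j:ℂ)+1)*((ℓ:ℂ)+(j:ℂ)+2)) * ((2*(j:ℂ)-1)*(2*(j:ℂ)+1)) * Tm ℓ w k (j+1) m
      - (2*(j:ℂ)-1)*(2*(j:ℂ)+1)*((w:ℂ)*((ℓ:ℂ)-2*(k:ℂ)) - (k:ℂ)*((ℓ:ℂ)+2)) * Tm ℓ w k j m) = 0 := by
  rw [Finset.sum_congr rfl (fun m hm => certm ℓ w k j m hj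
    (by rw [Finset.mem_range] at hm; omega) hk)]
  rw [← Finset.mul_sum, Finset.sum_range_sub (Gg ℓ w k j), Gg_top, Gg_zero]
  simp


/-- `a₀^{w,k} = 1` and the sequence `a_j^{w,k}` satisfies the three-term recursion with
eigenvalue `w(ℓ/2 - k) - k(ℓ/2 + 1)` (the term `a_{j-1}` carries the vanishing
coefficient `j` when `j = 0`, implementing `a_{-1}^{w,k} = 0`). -/
theorem aCoef_recursion (ℓ w k : ℕ) (hk : k ≤ ℓ) :
    aCoef ℓ w 0 k = 1 ∧
    ∀ j, j < ℓ →
      Complex.I * ((j : ℂ) * ((ℓ : ℂ) - j + 1) * ((w : ℂ) + k - j + 1) *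
          ((w : ℂ) + k + j + 1)) /
          (2 * (2 * (j : ℂ) - 1) * (2 * (j : ℂ) + 1)) * aCoef ℓ w (j - 1) k
        - (j : ℂ) * ((j : ℂ) + 1) / 2 * aCoef ℓ w j k
        - Complex.I * (((j : ℂ) + 1) * ((ℓ : ℂ) + j + 2)) / 2 * aCoef ℓ w (j + 1) k
      = ((w : ℂ) * ((ℓ : ℂ) / 2 - k) - (k : ℂ) * ((ℓ : ℂ) / 2 + 1)) * aCoef ℓ w j k := by
  constructor
  · simp [aCoef, racahR, poch]
  · intro j hj
    have h2jm1 : (2*(j:ℂ)-1) ≠ 0 := by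
      intro h
      have h2 : ((2*j:ℕ):ℂ) = ((1:ℕ):ℂ) := by push_cast; linear_combination h
      have h3 := Nat.cast_injective (R := ℂ) h2
      omega
    have h2jp1 : (2*(j:ℂ)+1) ≠ 0 := by
      intro h
      have h2 : ((2*j+1:ℕ):ℂ) = ((0:ℕ):ℂ) := by push_cast; linear_combination h
      have h3 := Nat.cast_injective (R := ℂ) h2
      omega
    have hχ : (2*(2*(j:ℂ)-1)*(2*(j:ℂ)+1)) ≠ 0 :=
      mul_ne_zero (mul_ne_zero two_ne_zero h2jm1) h2jp1
    apply mul_left_cancel₀ hχ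
    have hsum := hsum_tele ℓ w k j hj hk
    rw [Finset.sum_sub_distrib, Finset.sum_sub_distrib, Finset.sum_sub_distrib,
      ← Finset.mul_sum, ← Finset.mul_sum, ← Finset.mul_sum, ← Finset.mul_sum] at hsum
    rw [aCoef_eq_sum ℓ w (j-1) k, aCoef_eq_sum ℓ w j k, aCoef_eq_sum ℓ w (j+1) k]
    have hcan1 : Complex.I * ((j:ℂ) * ((ℓ:ℂ) - j + 1) * ((w:ℂ) + k - j + 1) * ((w:ℂ) + k + j + 1)) /
          (2 * (2 * (j:ℂ) - 1) * (2 * (j:ℂ) + 1)) * (2 * (2 * (j:ℂ) - 1) * (2 * (j:ℂ) + 1))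
        = Complex.I * ((j:ℂ) * ((ℓ:ℂ) - j + 1) * ((w:ℂ) + k - j + 1) * ((w:ℂ) + k + j + 1)) :=
      div_mul_cancel₀ _ hχ
    linear_combination hsum + (∑ m ∈ Finset.range (k+1), Tm ℓ w k (j-1) m) * hcan1
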